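/- arXiv:quant-ph/0307190 — 2 statements merged into one kernel-verified Lean document; each statement's English description precedes it below -/
import Mathlib

section
/- (Ky Fan) For Hermitian n×n matrices H and K, the eigenvalue vector of H+K is majorized by the sum of the eigenvalue vectors of H and K: λ(H+K) ≺ λ(H) + λ(K), where λ(A) lists eigenvalues in nonincreasing order. -/
/-
Take orthonormal eigenvectors `w₁, …, w_k` of `H + K` for its `k` largest eigenvalues. The sum of
these eigenvalues is `∑ⱼ re ⟪(H + K) wⱼ, wⱼ⟫ = ∑ⱼ re ⟪H wⱼ, wⱼ⟫ + ∑ⱼ re ⟪K wⱼ, wⱼ⟫`, and by Ky Fan's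
maximum principle each of the last two sums is at most the sum of the `k` largest eigenvalues of
`H`, resp. `K`. For the maximum principle, expand in an orthonormal eigenbasis `vᵢ` of `H`:
`∑ⱼ re ⟪H wⱼ, wⱼ⟫ = ∑ᵢ λᵢ dᵢ` with weights `dᵢ = ∑ⱼ |⟪vᵢ, wⱼ⟫|² ∈ [0, 1]` (Bessel) of total mass
`k` (Parseval), and such a weighted sum is largest when the weight sits on the `k` largest `λᵢ`.
The total sums agree because the trace is additive.
-/

open Finset

/-- The entries of `x` rearranged into nonincreasing order. -/
noncomputable def sortDesc {n : ℕ} (x : Fin n → ℝ) : Fin n → ℝ :=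
  fun i => -((-x) (Tuple.sort (-x) i))

/-- `Majorizes x y` means `x ≺ y`: every partial sum of the `k` largest entries of `x`
is at most the corresponding partial sum for `y`, with equality for the total sum. -/
noncomputable def Majorizes {n : ℕ} (x y : Fin n → ℝ) : Prop :=
  (∀ k : ℕ, k ≤ n →
      ∑ i ∈ univ.filter (fun i : Fin n => (i : ℕ) < k), sortDesc x i ≤
        ∑ i ∈ univ.filter (fun i : Fin n => (i : ℕ) < k), sortDesc y i) ∧
  ∑ i, x i = ∑ i, y i

variable {n : ℕ}

lemma sortDesc_apply (x : Fin n → ℝ) (i : Fin n) : sortDesc x i = x (Tuple.sort (-x) i) := by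
  simp [sortDesc]

lemma antitone_sortDesc (x : Fin n → ℝ) : Antitone (sortDesc x) := fun i j hij => by
  simpa [sortDesc_apply] using Tuple.monotone_sort (-x) hij

lemma sortDesc_eq_self {x : Fin n → ℝ} (hx : Antitone x) : sortDesc x = x := by
  funext i
  have hσ : Tuple.sort (-x) = 1 := Tuple.sort_eq_refl_iff_monotone.2 hx.neg
  rw [sortDesc_apply, hσ]
  rfl

lemma sum_sortDesc (x : Fin n → ℝ) : ∑ i, sortDesc x i = ∑ i, x i := by
  simpa only [sortDesc_apply] using Equiv.sum_comp (Tuple.sort (-x)) x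

lemma Antitone.sum_mul_le_sum_filter_lt {s d : Fin n → ℝ} (hs : Antitone s)
    (hd0 : 0 ≤ d) (hd1 : d ≤ 1) {k : ℕ} (hk : k ≤ n) (hd : ∑ i, d i = k) :
    ∑ i, s i * d i ≤ ∑ i ∈ univ.filter (fun i : Fin n => (i : ℕ) < k), s i := by
  rcases n.eq_zero_or_pos with rfl | hn
  · simp
  let χ : Fin n → ℝ := fun i => if (i : ℕ) < k then 1 else 0
  -- the threshold `t` separates the entries where `d ≤ χ` from those where `χ ≤ d`
  let t := s ⟨min k (n - 1), by omega⟩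
  have hχ : ∑ i, χ i = k := by
    simp [χ, sum_boole, Fin.card_filter_val_lt, hk]
  have hsχ : ∑ i, s i * χ i = ∑ i ∈ univ.filter (fun i : Fin n => (i : ℕ) < k), s i := by
    simp [χ, sum_filter]
  have hsign : ∀ i, (s i - t) * (d i - χ i) ≤ 0 := by
    intro i
    by_cases hi : (i : ℕ) < k
    · refine mul_nonpos_of_nonneg_of_nonpos (sub_nonneg.2 (hs ?_)) ?_
      · exact Fin.le_def.2 (by dsimp only; omega)
      · simpa [χ, hi] using hd1 i
    · refine mul_nonpos_of_nonpos_of_nonneg (sub_nonpos.2 (hs ?_)) ?_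
      · exact Fin.le_def.2 (by dsimp only; omega)
      · simpa [χ, hi] using hd0 i
  have hexpand : ∑ i, (s i - t) * (d i - χ i)
      = ∑ i, s i * d i - ∑ i, s i * χ i - t * (∑ i, d i - ∑ i, χ i) := by
    simp only [sub_mul, mul_sub, sum_sub_distrib, mul_sum]
    ring
  have := sum_nonpos fun i (_ : i ∈ univ) => hsign i
  rw [hexpand, hd, hχ, hsχ] at this
  linarith

lemma sum_mul_le_sum_sortDesc (x : Fin n → ℝ) {d : Fin n → ℝ}
    (hd0 : 0 ≤ d) (hd1 : d ≤ 1) {k : ℕ} (hk : k ≤ n) (hd : ∑ i, d i = k) :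
    ∑ i, x i * d i ≤ ∑ i ∈ univ.filter (fun i : Fin n => (i : ℕ) < k), sortDesc x i := by
  let σ := Tuple.sort (-x)
  calc ∑ i, x i * d i = ∑ i, sortDesc x i * d (σ i) := by
        simp only [sortDesc_apply]; exact (Equiv.sum_comp σ fun i => x i * d i).symm
    _ ≤ _ := (antitone_sortDesc x).sum_mul_le_sum_filter_lt (d := d ∘ σ) (fun i => hd0 (σ i))
        (fun i => hd1 (σ i)) hk (by rwa [Function.comp_def, Equiv.sum_comp σ d])

section InnerProductSpace

open RCLike
open scoped InnerProductSpace

variable {𝕜 E ι : Type*} [RCLike 𝕜] [NormedAddCommGroup E] [InnerProductSpace 𝕜 E]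

lemma re_inner_apply_self_of_apply_eq_smul {T : E →ₗ[𝕜] E} {v : E} {μ : ℝ} (hv : ‖v‖ = 1)
    (hTv : T v = (μ : 𝕜) • v) : re ⟪T v, v⟫_𝕜 = μ := by
  simp [hTv, inner_smul_left, inner_self_eq_norm_sq_to_K, hv]

lemma LinearMap.IsSymmetric.re_inner_apply_self_eq_sum [Fintype ι] {T : E →ₗ[𝕜] E}
    (hT : T.IsSymmetric) {b : OrthonormalBasis ι 𝕜 E} {μ : ι → ℝ}
    (hb : ∀ i, T (b i) = (μ i : 𝕜) • b i) (x : E) :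
    re ⟪T x, x⟫_𝕜 = ∑ i, μ i * ‖⟪b i, x⟫_𝕜‖ ^ 2 := by
  rw [← b.sum_inner_mul_inner (T x) x, map_sum]
  refine sum_congr rfl fun i _ => ?_
  rw [hT, hb, inner_smul_right, mul_assoc, re_ofReal_mul, inner_mul_symm_re_eq_norm, norm_mul,
    norm_inner_symm, sq]

lemma Orthonormal.sum_sq_norm_inner_le_one {w : ι → E} (hw : Orthonormal 𝕜 w) (s : Finset ι)
    {v : E} (hv : ‖v‖ = 1) : ∑ j ∈ s, ‖⟪v, w j⟫_𝕜‖ ^ 2 ≤ 1 := by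
  simpa [norm_inner_symm, hv] using hw.sum_inner_products_le v (s := s)

lemma OrthonormalBasis.sum_sum_sq_norm_inner_eq_card {κ : Type*} [Fintype κ]
    (b : OrthonormalBasis κ 𝕜 E) {w : ι → E} (hw : Orthonormal 𝕜 w) (s : Finset ι) :
    ∑ i, ∑ j ∈ s, ‖⟪b i, w j⟫_𝕜‖ ^ 2 = #s := by
  rw [sum_comm]
  simp [b.sum_sq_norm_inner_right, hw.1]

theorem LinearMap.IsSymmetric.sum_re_inner_le_sum_sortDesc {T : E →ₗ[𝕜] E}
    (hT : T.IsSymmetric) {b : OrthonormalBasis (Fin n) 𝕜 E} {μ : Fin n → ℝ}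
    (hb : ∀ i, T (b i) = (μ i : 𝕜) • b i) {w : ι → E} (hw : Orthonormal 𝕜 w) (s : Finset ι)
    (hs : #s ≤ n) :
    ∑ j ∈ s, re ⟪T (w j), w j⟫_𝕜 ≤
      ∑ i ∈ univ.filter (fun i : Fin n => (i : ℕ) < #s), sortDesc μ i := by
  let d : Fin n → ℝ := fun i => ∑ j ∈ s, ‖⟪b i, w j⟫_𝕜‖ ^ 2
  calc ∑ j ∈ s, re ⟪T (w j), w j⟫_𝕜 = ∑ i, μ i * d i := by
        simp only [hT.re_inner_apply_self_eq_sum hb, d, mul_sum]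
        exact sum_comm
    _ ≤ _ := sum_mul_le_sum_sortDesc μ (fun i => sum_nonneg fun j _ => sq_nonneg _)
        (fun i => hw.sum_sq_norm_inner_le_one s (b.orthonormal.1 i)) hs
        (b.sum_sum_sq_norm_inner_eq_card hw s)

end InnerProductSpace

namespace Matrix.IsHermitian

variable {𝕜 : Type*} [RCLike 𝕜] {A B : Matrix (Fin n) (Fin n) 𝕜}

lemma toEuclideanLin_eigenvectorBasis (hA : A.IsHermitian) (i : Fin n) :
    toEuclideanLin A (hA.eigenvectorBasis i) = (hA.eigenvalues i : 𝕜) • hA.eigenvectorBasis i := by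
  rw [toLpLin_apply, hA.mulVec_eigenvectorBasis, RCLike.real_smul_eq_coe_smul (K := 𝕜)]
  rfl

theorem sum_re_inner_le_sum_sortDesc (hA : A.IsHermitian) {ι : Type*}
    {w : ι → EuclideanSpace 𝕜 (Fin n)} (hw : Orthonormal 𝕜 w) (s : Finset ι) (hs : #s ≤ n) :
    ∑ j ∈ s, RCLike.re (inner 𝕜 (toEuclideanLin A (w j)) (w j)) ≤
      ∑ i ∈ univ.filter (fun i : Fin n => (i : ℕ) < #s), sortDesc hA.eigenvalues i :=
  (isSymmetric_toEuclideanLin_iff.2 hA).sum_re_inner_le_sum_sortDesc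
    hA.toEuclideanLin_eigenvectorBasis hw s hs

lemma exists_orthonormal_re_inner_eq_sortDesc (hA : A.IsHermitian) :
    ∃ w : Fin n → EuclideanSpace 𝕜 (Fin n), Orthonormal 𝕜 w ∧
      ∀ i, RCLike.re (inner 𝕜 (toEuclideanLin A (w i)) (w i)) = sortDesc hA.eigenvalues i := by
  refine ⟨hA.eigenvectorBasis ∘ Tuple.sort (-hA.eigenvalues),
    hA.eigenvectorBasis.orthonormal.comp _ (Tuple.sort _).injective, fun i => ?_⟩
  rw [sortDesc_apply]
  exact re_inner_apply_self_of_apply_eq_smul (hA.eigenvectorBasis.orthonormal.1 _)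
    (hA.toEuclideanLin_eigenvectorBasis _)

lemma sum_eigenvalues_add (hA : A.IsHermitian) (hB : B.IsHermitian) (hAB : (A + B).IsHermitian) :
    ∑ i, hAB.eigenvalues i = ∑ i, hA.eigenvalues i + ∑ i, hB.eigenvalues i := by
  have h := hAB.trace_eq_sum_eigenvalues
  rw [trace_add, hA.trace_eq_sum_eigenvalues, hB.trace_eq_sum_eigenvalues] at h
  exact_mod_cast h.symm

end Matrix.IsHermitian

open RCLike Matrix in
/-- Ky Fan: `λ(H + K) ≺ λ(H) + λ(K)` for Hermitian matrices. -/
theorem stmt_11 {n : ℕ} (H K : Matrix (Fin n) (Fin n) ℂ)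
    (hH : H.IsHermitian) (hK : K.IsHermitian) (hHK : (H + K).IsHermitian) :
    Majorizes (sortDesc hHK.eigenvalues)
      (sortDesc hH.eigenvalues + sortDesc hK.eigenvalues) := by
  refine ⟨fun k hk => ?_, ?_⟩
  · rw [sortDesc_eq_self (antitone_sortDesc _), sortDesc_eq_self (x := sortDesc _ + sortDesc _)
      ((antitone_sortDesc _).add (antitone_sortDesc _))]
    obtain ⟨w, hw, hw_eig⟩ := hHK.exists_orthonormal_re_inner_eq_sortDesc
    set F := univ.filter fun i : Fin n => (i : ℕ) < k
    have hF : #F = k := by simp [F, Fin.card_filter_val_lt, hk]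
    have hHF := hH.sum_re_inner_le_sum_sortDesc hw F (hF ▸ hk)
    have hKF := hK.sum_re_inner_le_sum_sortDesc hw F (hF ▸ hk)
    rw [hF] at hHF hKF
    calc ∑ i ∈ F, sortDesc hHK.eigenvalues i
        = ∑ i ∈ F, re (inner ℂ (toEuclideanLin H (w i)) (w i))
          + ∑ i ∈ F, re (inner ℂ (toEuclideanLin K (w i)) (w i)) := by
          simp only [← hw_eig, map_add, LinearMap.add_apply, inner_add_left, sum_add_distrib]
      _ ≤ ∑ i ∈ F, sortDesc hH.eigenvalues i + ∑ i ∈ F, sortDesc hK.eigenvalues i :=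
          add_le_add hHF hKF
      _ = ∑ i ∈ F, (sortDesc hH.eigenvalues + sortDesc hK.eigenvalues) i :=
          sum_add_distrib.symm
  · simp only [Pi.add_apply, sum_add_distrib, sum_sortDesc]
    exact hH.sum_eigenvalues_add hK hHK
end

section
/- Let U be a 4×4 unitary that admits a canonical decomposition U = (A₁ ⊗ B₁) U_c (A₂ ⊗ B₂) with A₁, A₂, B₁, B₂ 2×2 unitaries of determinant 1 and U_c = exp(i(θx X⊗X + θy Y⊗Y + θz Z⊗Z)). Then U Ũ = (A₁ ⊗ B₁) U_c² (A₁ ⊗ B₁)†, where Ũ = (Y⊗Y) Uᵀ (Y⊗Y). In particular, U Ũ is unitarily conjugate to U_c². -/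
open Matrix Kronecker

noncomputable def PauliX : Matrix (Fin 2) (Fin 2) ℂ := !![0, 1; 1, 0]
noncomputable def PauliY : Matrix (Fin 2) (Fin 2) ℂ := !![0, -Complex.I; Complex.I, 0]
noncomputable def PauliZ : Matrix (Fin 2) (Fin 2) ℂ := !![1, 0; 0, -1]

/-- The spin flip of a 4×4 matrix: `M̃ = (Y ⊗ Y) Mᵀ (Y ⊗ Y)`. -/
noncomputable def spinFlip (M : Matrix (Fin 2 × Fin 2) (Fin 2 × Fin 2) ℂ) :
    Matrix (Fin 2 × Fin 2) (Fin 2 × Fin 2) ℂ :=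
  (PauliY ⊗ₖ PauliY) * Mᵀ * (PauliY ⊗ₖ PauliY)

/-- The canonical two-qubit Hamiltonian `θx X⊗X + θy Y⊗Y + θz Z⊗Z`. -/
noncomputable def canonicalHam (θx θy θz : ℝ) :
    Matrix (Fin 2 × Fin 2) (Fin 2 × Fin 2) ℂ :=
  (θx : ℂ) • (PauliX ⊗ₖ PauliX) + (θy : ℂ) • (PauliY ⊗ₖ PauliY) +
    (θz : ℂ) • (PauliZ ⊗ₖ PauliZ)

/-! The spin flip `M ↦ (Y⊗Y) Mᵀ (Y⊗Y)` is an anti-automorphism of the matrix algebra commuting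
with `exp`, and on a product operator it acts factorwise by `Y Aᵀ Y = adj A`. Hence
`K K̃ = (det A det B) • 1` for `K = A ⊗ B`, so `K̃ = Kᴴ` when `A, B ∈ SU(2)`. Every Pauli
matrix has adjugate `-P`, so `P ⊗ P` and therefore `U_c` are fixed by the spin flip, and
`U Ũ = K₁ U_c (K₂ K̃₂) U_c K̃₁ = K₁ U_c² K₁ᴴ`. -/

namespace Matrix

theorem neg_kronecker_neg {R l m n p : Type*} [Mul R] [HasDistribNeg R]
    (A : Matrix l m R) (B : Matrix n p R) : (-A) ⊗ₖ (-B) = A ⊗ₖ B := by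
  ext; simp

end Matrix

theorem pauliY_mul_pauliY : PauliY * PauliY = 1 := by
  ext i j
  fin_cases i <;> fin_cases j <;> simp [PauliY]

theorem pauliY_mul_transpose_mul_pauliY (A : Matrix (Fin 2) (Fin 2) ℂ) :
    PauliY * Aᵀ * PauliY = A.adjugate := by
  rw [adjugate_fin_two]
  ext i j
  fin_cases i <;> fin_cases j <;>
    simp [PauliY, Matrix.mul_apply, Fin.sum_univ_succ, vecMul, dotProduct] <;>
    ring_nf <;> simp [Complex.I_sq]

theorem adjugate_pauliX : PauliX.adjugate = -PauliX := by
  ext i j; fin_cases i <;> fin_cases j <;> simp [PauliX, adjugate_fin_two]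

theorem adjugate_pauliY : PauliY.adjugate = -PauliY := by
  ext i j; fin_cases i <;> fin_cases j <;> simp [PauliY, adjugate_fin_two]

theorem adjugate_pauliZ : PauliZ.adjugate = -PauliZ := by
  ext i j; fin_cases i <;> fin_cases j <;> simp [PauliZ, adjugate_fin_two]

theorem pauliY_kronecker_pauliY_mul_self : (PauliY ⊗ₖ PauliY) * (PauliY ⊗ₖ PauliY) = 1 := by
  rw [← mul_kronecker_mul, pauliY_mul_pauliY, one_kronecker_one]

theorem spinFlip_add (M N : Matrix (Fin 2 × Fin 2) (Fin 2 × Fin 2) ℂ) :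
    spinFlip (M + N) = spinFlip M + spinFlip N := by
  simp only [spinFlip, transpose_add, Matrix.mul_add, Matrix.add_mul]

theorem spinFlip_smul (c : ℂ) (M : Matrix (Fin 2 × Fin 2) (Fin 2 × Fin 2) ℂ) :
    spinFlip (c • M) = c • spinFlip M := by
  simp only [spinFlip, transpose_smul, Matrix.mul_smul, Matrix.smul_mul]

theorem spinFlip_mul (M N : Matrix (Fin 2 × Fin 2) (Fin 2 × Fin 2) ℂ) :
    spinFlip (M * N) = spinFlip N * spinFlip M := by
  simp only [spinFlip, transpose_mul]
  calc (PauliY ⊗ₖ PauliY) * (Nᵀ * Mᵀ) * (PauliY ⊗ₖ PauliY)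
      = (PauliY ⊗ₖ PauliY) * Nᵀ * ((PauliY ⊗ₖ PauliY) * (PauliY ⊗ₖ PauliY)) * Mᵀ
          * (PauliY ⊗ₖ PauliY) := by
        rw [pauliY_kronecker_pauliY_mul_self, Matrix.mul_one, Matrix.mul_assoc _ Nᵀ]
    _ = _ := by simp only [Matrix.mul_assoc]

theorem spinFlip_exp (M : Matrix (Fin 2 × Fin 2) (Fin 2 × Fin 2) ℂ) :
    spinFlip (NormedSpace.exp M) = NormedSpace.exp (spinFlip M) := by
  have hinv : (PauliY ⊗ₖ PauliY)⁻¹ = PauliY ⊗ₖ PauliY :=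
    inv_eq_left_inv pauliY_kronecker_pauliY_mul_self
  have hconj := exp_conj _ Mᵀ (.of_mul_eq_one _ pauliY_kronecker_pauliY_mul_self)
  rw [hinv] at hconj
  rw [spinFlip, spinFlip, ← exp_transpose, hconj]

theorem spinFlip_kronecker (A B : Matrix (Fin 2) (Fin 2) ℂ) :
    spinFlip (A ⊗ₖ B) = A.adjugate ⊗ₖ B.adjugate := by
  rw [spinFlip, ← kroneckerMap_transpose, ← mul_kronecker_mul, ← mul_kronecker_mul,
    pauliY_mul_transpose_mul_pauliY, pauliY_mul_transpose_mul_pauliY]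

theorem spinFlip_canonicalHam (θx θy θz : ℝ) :
    spinFlip (canonicalHam θx θy θz) = canonicalHam θx θy θz := by
  simp only [canonicalHam, spinFlip_add, spinFlip_smul, spinFlip_kronecker, adjugate_pauliX,
    adjugate_pauliY, adjugate_pauliZ, neg_kronecker_neg]

theorem kronecker_mul_spinFlip_kronecker (A B : Matrix (Fin 2) (Fin 2) ℂ) :
    (A ⊗ₖ B) * spinFlip (A ⊗ₖ B) = (A.det * B.det) • 1 := by
  rw [spinFlip_kronecker, ← mul_kronecker_mul, mul_adjugate, mul_adjugate, smul_kronecker,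
    kronecker_smul, one_kronecker_one, smul_smul]

theorem spinFlip_kronecker_of_mem_unitaryGroup {A B : Matrix (Fin 2) (Fin 2) ℂ}
    (hA : A ∈ unitaryGroup (Fin 2) ℂ) (hB : B ∈ unitaryGroup (Fin 2) ℂ)
    (hdA : A.det = 1) (hdB : B.det = 1) :
    spinFlip (A ⊗ₖ B) = (A ⊗ₖ B)ᴴ := by
  have hK : A ⊗ₖ B ∈ unitaryGroup (Fin 2 × Fin 2) ℂ := kronecker_mem_unitary hA hB
  have h := kronecker_mul_spinFlip_kronecker A B
  rw [hdA, hdB, one_mul, one_smul] at h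
  exact (inv_eq_right_inv h).symm.trans (inv_eq_right_inv (mem_unitaryGroup_iff.mp hK))

theorem stmt_15_general (θx θy θz : ℝ) (A₁ B₁ A₂ B₂ : Matrix (Fin 2) (Fin 2) ℂ)
    (hA₁ : A₁ ∈ Matrix.unitaryGroup (Fin 2) ℂ) (hB₁ : B₁ ∈ Matrix.unitaryGroup (Fin 2) ℂ)
    (hdA₁ : A₁.det = 1) (hdB₁ : B₁.det = 1) (hdA₂ : A₂.det = 1) (hdB₂ : B₂.det = 1)
    (Uc U : Matrix (Fin 2 × Fin 2) (Fin 2 × Fin 2) ℂ)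
    (hUc : Uc = NormedSpace.exp (Complex.I • canonicalHam θx θy θz))
    (hU : U = (A₁ ⊗ₖ B₁) * Uc * (A₂ ⊗ₖ B₂)) :
    U * spinFlip U = (A₁ ⊗ₖ B₁) * Uc ^ 2 * (A₁ ⊗ₖ B₁)ᴴ := by
  have hK₂ : (A₂ ⊗ₖ B₂) * spinFlip (A₂ ⊗ₖ B₂) = 1 := by
    rw [kronecker_mul_spinFlip_kronecker, hdA₂, hdB₂, one_mul, one_smul]
  have hUc' : spinFlip Uc = Uc := by
    rw [hUc, spinFlip_exp, spinFlip_smul, spinFlip_canonicalHam]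
  rw [hU, spinFlip_mul, spinFlip_mul, hUc',
    spinFlip_kronecker_of_mem_unitaryGroup hA₁ hB₁ hdA₁ hdB₁]
  calc _ = (A₁ ⊗ₖ B₁) * Uc * ((A₂ ⊗ₖ B₂) * spinFlip (A₂ ⊗ₖ B₂)) * Uc * (A₁ ⊗ₖ B₁)ᴴ := by
        simp only [Matrix.mul_assoc]
    _ = (A₁ ⊗ₖ B₁) * Uc ^ 2 * (A₁ ⊗ₖ B₁)ᴴ := by
        rw [hK₂, Matrix.mul_one, sq]
        simp only [Matrix.mul_assoc]

theorem stmt_15 (θx θy θz : ℝ) (A₁ B₁ A₂ B₂ : Matrix (Fin 2) (Fin 2) ℂ)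
    (hA₁ : A₁ ∈ Matrix.unitaryGroup (Fin 2) ℂ) (hB₁ : B₁ ∈ Matrix.unitaryGroup (Fin 2) ℂ)
    (hA₂ : A₂ ∈ Matrix.unitaryGroup (Fin 2) ℂ) (hB₂ : B₂ ∈ Matrix.unitaryGroup (Fin 2) ℂ)
    (hdA₁ : A₁.det = 1) (hdB₁ : B₁.det = 1) (hdA₂ : A₂.det = 1) (hdB₂ : B₂.det = 1)
    (Uc U : Matrix (Fin 2 × Fin 2) (Fin 2 × Fin 2) ℂ)
    (hUc : Uc = NormedSpace.exp (Complex.I • canonicalHam θx θy θz))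
    (hU : U = (A₁ ⊗ₖ B₁) * Uc * (A₂ ⊗ₖ B₂)) :
    U * spinFlip U = (A₁ ⊗ₖ B₁) * Uc ^ 2 * (A₁ ⊗ₖ B₁)ᴴ :=
  stmt_15_general θx θy θz A₁ B₁ A₂ B₂ hA₁ hB₁ hdA₁ hdB₁ hdA₂ hdB₂ Uc U hUc hU
end
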